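/- arXiv:2309.08702 — 4 statements merged into one kernel-verified Lean document; each statement's English description precedes it below -/
import Mathlib

section
/- With Λ(t,f) := −(∫_𝕋 f(x) · (∂ₓ²φ_t/ρ_t)(X_t(x)) · ρ(x) dx) · (ρ̂_t ∘ X_t), one has for all t ∈ [0,1] and all f, g ∈ L²(ρ dx): ‖Λ(t,f) − Λ(t,g)‖_{L²(ρ dx)} ≤ (sup_{t∈[0,1]} ‖∂ₓ²φ_t‖_∞) · ‖f − g‖_{L²(ρ dx)}. -/
open MeasureTheory Set ContDiff

/-- `σ̂ := 1 / ((∫ σ⁻¹) ⬝ σ)` for a density `σ` on the torus (modelled by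
`1`-periodic functions on `ℝ`, with the normalized Lebesgue measure identified
with Lebesgue measure on `(0,1]`). -/
noncomputable def torusHat (σ : ℝ → ℝ) : ℝ → ℝ :=
  fun x => ((∫ y in Set.Ioc (0:ℝ) 1, (σ y)⁻¹) * σ x)⁻¹

/-- Weighted Cauchy–Schwarz for real integrals. -/
lemma cs_integral_weighted {μ : Measure ℝ} (u v ρ : ℝ → ℝ) (hρ : ∀ x, 0 ≤ ρ x)
    (hu : Integrable (fun x => u x ^ 2 * ρ x) μ)
    (hv : Integrable (fun x => v x ^ 2 * ρ x) μ)
    (huv : Integrable (fun x => u x * v x * ρ x) μ) :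
    (∫ x, u x * v x * ρ x ∂μ) ^ 2
      ≤ (∫ x, u x ^ 2 * ρ x ∂μ) * (∫ x, v x ^ 2 * ρ x ∂μ) := by
  set S := ∫ x, u x ^ 2 * ρ x ∂μ with hS
  set P := ∫ x, u x * v x * ρ x ∂μ with hP
  set T := ∫ x, v x ^ 2 * ρ x ∂μ with hT
  have key : ∀ lam : ℝ, 0 ≤ S * (lam * lam) + (2 * P) * lam + T := by
    intro lam
    have h1 : Integrable (fun x => lam ^ 2 * (u x ^ 2 * ρ x)) μ := hu.const_mul _
    have h2 : Integrable (fun x => 2 * lam * (u x * v x * ρ x)) μ := huv.const_mul _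
    have hnn : 0 ≤ ∫ x, (lam * u x + v x) ^ 2 * ρ x ∂μ :=
      integral_nonneg fun x => mul_nonneg (sq_nonneg _) (hρ x)
    have expand : (fun x => (lam * u x + v x) ^ 2 * ρ x)
        = fun x => lam ^ 2 * (u x ^ 2 * ρ x)
            + (2 * lam * (u x * v x * ρ x) + v x ^ 2 * ρ x) := by
      funext x; ring
    have h3 : Integrable (fun x => 2 * lam * (u x * v x * ρ x) + v x ^ 2 * ρ x) μ :=
      h2.add hv
    rw [expand, integral_add h1 h3, integral_add h2 hv,
      integral_const_mul _ _, integral_const_mul _ _] at hnn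
    have e : S * (lam * lam) + (2 * P) * lam + T
        = lam ^ 2 * S + (2 * lam * P + T) := by ring
    rw [e]; exact hnn
  have hd := discrim_le_zero key
  rw [discrim] at hd
  nlinarith [hd]

/-- The derivative of a periodic function is periodic. -/
lemma periodic_deriv' (f : ℝ → ℝ) (hf : Function.Periodic f 1) :
    Function.Periodic (deriv f) 1 := by
  intro x
  have h : (fun y => f (y + 1)) = f := funext hf
  rw [← deriv_comp_add_const, h]

/-- Lemma 3.4: Lipschitz estimate for `Λ` in `L²(ρ dx)`:
`‖Λ(t,f) − Λ(t,g)‖_{L²(ρ dx)} ≤ (sup_t ‖∂ₓ²φ_t‖_∞) ⬝ ‖f − g‖_{L²(ρ dx)}`. -/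
theorem Lam_lipschitz
    -- the driving potentials φ_t : continuous in t, smooth and periodic in x
    (φ : ℝ → ℝ → ℝ) (hφc : Continuous fun p : ℝ × ℝ => φ p.1 p.2)
    (hφsm : ∀ t, ContDiff ℝ (⊤ : ℕ∞) (φ t)) (hφper : ∀ t, Function.Periodic (φ t) 1)
    -- the flow X_t of ∂ₓφ_t
    (X : ℝ → ℝ → ℝ) (hX0 : ∀ x, X 0 x = x)
    (hXm : ∀ t, Measurable (X t)) (hXper : ∀ t x, X t (x + 1) = X t x + 1)
    (hXflow : ∀ t ∈ Icc (0:ℝ) 1, ∀ x, HasDerivAt (fun s => X s x) (deriv (φ t) (X t x)) t)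
    -- the initial density ρ : smooth, positive, of mass 1
    (ρ : ℝ → ℝ) (hρsm : ContDiff ℝ (⊤ : ℕ∞) ρ) (hρper : Function.Periodic ρ 1)
    (hρpos : ∀ x, 0 < ρ x) (hρone : ∫ x in Set.Ioc (0:ℝ) 1, ρ x = 1)
    -- ρ_t : the density of (X_t)_#(ρ dx), continuous and positive
    (ρt : ℝ → ℝ → ℝ) (hρtc : ∀ t, Continuous (ρt t))
    (hρtper : ∀ t, Function.Periodic (ρt t) 1) (hρtpos : ∀ t x, 0 < ρt t x)
    (hpush : ∀ t ∈ Icc (0:ℝ) 1, ∀ h : ℝ → ℝ, Continuous h → Function.Periodic h 1 →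
      ∫ x in Set.Ioc (0:ℝ) 1, h (X t x) * ρ x = ∫ x in Set.Ioc (0:ℝ) 1, h x * ρt t x)
    -- C is a uniform bound for ‖∂ₓ²φ_t‖_∞, t ∈ [0,1]
    (C : ℝ) (hC : ∀ t ∈ Icc (0:ℝ) 1, ∀ x, |deriv (deriv (φ t)) x| ≤ C) :
    ∀ t ∈ Icc (0:ℝ) 1, ∀ f g : ℝ → ℝ, Measurable f → Measurable g →
      IntegrableOn (fun x => (f x) ^ 2 * ρ x) (Set.Ioc (0:ℝ) 1) →
      IntegrableOn (fun x => (g x) ^ 2 * ρ x) (Set.Ioc (0:ℝ) 1) →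
      Real.sqrt (∫ x in Set.Ioc (0:ℝ) 1,
          ((-(∫ y in Set.Ioc (0:ℝ) 1,
                f y * (deriv (deriv (φ t)) (X t y) / ρt t (X t y)) * ρ y)
              * torusHat (ρt t) (X t x))
           - (-(∫ y in Set.Ioc (0:ℝ) 1,
                g y * (deriv (deriv (φ t)) (X t y) / ρt t (X t y)) * ρ y)
              * torusHat (ρt t) (X t x))) ^ 2 * ρ x)
        ≤ C * Real.sqrt (∫ x in Set.Ioc (0:ℝ) 1, (f x - g x) ^ 2 * ρ x) := by
  intro t ht f g hf hg hfint hgint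
  have hC0 : 0 ≤ C := le_trans (abs_nonneg _) (hC t ht 0)
  -- lower and upper bounds for ρt t on all of ℝ
  obtain ⟨a, _, hmin⟩ := isCompact_Icc.exists_isMinOn (α := ℝ)
    (⟨0, by constructor <;> norm_num⟩ : (Icc (0:ℝ) 1).Nonempty) (hρtc t).continuousOn
  obtain ⟨b, _, hmax⟩ := isCompact_Icc.exists_isMaxOn (α := ℝ)
    (⟨0, by constructor <;> norm_num⟩ : (Icc (0:ℝ) 1).Nonempty) (hρtc t).continuousOn
  set m : ℝ := ρt t a with hma
  set M : ℝ := ρt t b with hMb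
  have hm_pos : 0 < m := hρtpos t a
  have hm : ∀ x, m ≤ ρt t x := by
    intro x
    obtain ⟨y, hy, hxy⟩ := (hρtper t).exists_mem_Ico₀ one_pos x
    rw [hxy]; exact hmin (Ico_subset_Icc_self hy)
  have hM : ∀ x, ρt t x ≤ M := by
    intro x
    obtain ⟨y, hy, hxy⟩ := (hρtper t).exists_mem_Ico₀ one_pos x
    rw [hxy]; exact hmax (Ico_subset_Icc_self hy)
  have hM_pos : 0 < M := lt_of_lt_of_le hm_pos (hm b)
  -- I := ∫ (ρt t)⁻¹ and its positivity
  set I : ℝ := ∫ y in Set.Ioc (0:ℝ) 1, (ρt t y)⁻¹ with hIdef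
  have hρtne : ∀ x, ρt t x ≠ 0 := fun x => (hρtpos t x).ne'
  have hinv_cont : Continuous fun y => (ρt t y)⁻¹ := (hρtc t).inv₀ hρtne
  have hinv_int : IntegrableOn (fun y => (ρt t y)⁻¹) (Set.Ioc (0:ℝ) 1) :=
    hinv_cont.integrableOn_Ioc
  have hI_pos : 0 < I := by
    have hle : M⁻¹ * (volume (Set.Ioc (0:ℝ) 1)).toReal ≤ I :=
      setIntegral_ge_of_const_le_real measurableSet_Ioc (by simp)
        (fun x _ => inv_anti₀ (hρtpos t x) (hM x)) hinv_int
    have hvol : (volume (Set.Ioc (0:ℝ) 1)).toReal = 1 := by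
      simp [Real.volume_Ioc]
    rw [hvol, mul_one] at hle
    exact lt_of_lt_of_le (inv_pos.mpr hM_pos) hle
  -- second derivative of φ t : continuous, periodic, bounded
  have hinf : ContDiff ℝ ∞ (φ t) := (hφsm t).of_le (by simp)
  have h1 : ContDiff ℝ ∞ (deriv (φ t)) := (contDiff_infty_iff_deriv.mp hinf).2
  have hφ2c : Continuous (deriv (deriv (φ t))) := h1.continuous_deriv (by exact_mod_cast (le_top : (1:ℕ∞) ≤ ⊤))
  have hφ2per : Function.Periodic (deriv (deriv (φ t))) 1 :=
    periodic_deriv' _ (periodic_deriv' _ (hφper t))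
  -- the weight q and w = q ∘ X t
  set q : ℝ → ℝ := fun y => deriv (deriv (φ t)) y / ρt t y with hqdef
  set w : ℝ → ℝ := fun x => q (X t x) with hwdef
  have hq_cont : Continuous q := hφ2c.div (hρtc t) hρtne
  have hq_per : Function.Periodic q 1 := by
    intro x; simp only [hqdef, hφ2per x, hρtper t x]
  set K : ℝ := C / m with hKdef
  have hK0 : 0 ≤ K := div_nonneg hC0 hm_pos.le
  have hq_bound : ∀ y, |q y| ≤ K := by
    intro y
    rw [hqdef, hKdef]
    rw [abs_div, abs_of_pos (hρtpos t y)]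
    exact div_le_div₀ hC0 (hC t ht y) hm_pos (hm y)
  have hw_bound : ∀ x, |w x| ≤ K := fun x => hq_bound (X t x)
  have hw_meas : Measurable w := hq_cont.measurable.comp (hXm t)
  have hρ_cont : Continuous ρ := hρsm.continuous
  have hρint : IntegrableOn ρ (Set.Ioc (0:ℝ) 1) := hρ_cont.integrableOn_Ioc
  -- integrability of h·w·ρ when h²ρ is integrable
  have key_int : ∀ h : ℝ → ℝ, Measurable h →
      IntegrableOn (fun x => (h x) ^ 2 * ρ x) (Set.Ioc (0:ℝ) 1) →
      IntegrableOn (fun x => h x * w x * ρ x) (Set.Ioc (0:ℝ) 1) := by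
    intro h hh hh2
    refine Integrable.mono' ((hh2.const_mul K).add (hρint.const_mul K))
      ((hh.mul hw_meas).mul hρ_cont.measurable).aestronglyMeasurable
      (ae_of_all _ fun x => ?_)
    have hb1 : |h x| * |w x| * ρ x ≤ |h x| * K * ρ x := by
      have h0 : 0 ≤ |h x| := abs_nonneg _
      have hmm : |w x| * (|h x| * ρ x) ≤ K * (|h x| * ρ x) :=
        mul_le_mul_of_nonneg_right (hw_bound x) (mul_nonneg h0 (hρpos x).le)
      nlinarith [hmm]
    have hb2 : |h x| ≤ h x ^ 2 + 1 := by
      nlinarith [sq_abs (h x), sq_nonneg (|h x| - 1), abs_nonneg (h x)]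
    calc ‖h x * w x * ρ x‖ = |h x| * |w x| * ρ x := by
          rw [Real.norm_eq_abs, abs_mul, abs_mul, abs_of_pos (hρpos x)]
      _ ≤ |h x| * K * ρ x := hb1
      _ = K * (|h x| * ρ x) := by ring
      _ ≤ K * ((h x ^ 2 + 1) * ρ x) := by
          exact mul_le_mul_of_nonneg_left
            (mul_le_mul_of_nonneg_right hb2 (hρpos x).le) hK0
      _ = K * (h x ^ 2 * ρ x) + K * ρ x := by ring
  have hfw : IntegrableOn (fun x => f x * w x * ρ x) (Set.Ioc (0:ℝ) 1) :=
    key_int f hf hfint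
  have hgw : IntegrableOn (fun x => g x * w x * ρ x) (Set.Ioc (0:ℝ) 1) :=
    key_int g hg hgint
  -- u := f − g
  set u : ℝ → ℝ := fun x => f x - g x with hudef
  have hu_meas : Measurable u := hf.sub hg
  have hu2 : IntegrableOn (fun x => u x ^ 2 * ρ x) (Set.Ioc (0:ℝ) 1) := by
    refine Integrable.mono' ((hfint.const_mul 2).add (hgint.const_mul 2))
      (((hu_meas.pow_const 2).mul hρ_cont.measurable).aestronglyMeasurable)
      (ae_of_all _ fun x => ?_)
    have hb : u x ^ 2 ≤ 2 * f x ^ 2 + 2 * g x ^ 2 := by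
      simp only [hudef]; nlinarith [sq_nonneg (f x + g x)]
    calc ‖u x ^ 2 * ρ x‖ = u x ^ 2 * ρ x := by
          rw [Real.norm_eq_abs, abs_of_nonneg (mul_nonneg (sq_nonneg _) (hρpos x).le)]
      _ ≤ (2 * f x ^ 2 + 2 * g x ^ 2) * ρ x :=
          mul_le_mul_of_nonneg_right hb (hρpos x).le
      _ = 2 * (f x ^ 2 * ρ x) + 2 * (g x ^ 2 * ρ x) := by ring
  have huw : IntegrableOn (fun x => u x * w x * ρ x) (Set.Ioc (0:ℝ) 1) :=
    key_int u hu_meas hu2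
  have hw2 : IntegrableOn (fun x => w x ^ 2 * ρ x) (Set.Ioc (0:ℝ) 1) := by
    refine Integrable.mono' (hρint.const_mul (K ^ 2))
      (((hw_meas.pow_const 2).mul hρ_cont.measurable).aestronglyMeasurable)
      (ae_of_all _ fun x => ?_)
    have hb := hw_bound x
    have hb' : w x ^ 2 ≤ K ^ 2 := by nlinarith [sq_abs (w x), abs_nonneg (w x)]
    calc ‖w x ^ 2 * ρ x‖ = w x ^ 2 * ρ x := by
          rw [Real.norm_eq_abs, abs_of_nonneg (mul_nonneg (sq_nonneg _) (hρpos x).le)]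
      _ ≤ K ^ 2 * ρ x := mul_le_mul_of_nonneg_right hb' (hρpos x).le
  -- abbreviations for the two inner integrals and S
  set A : ℝ := ∫ y in Set.Ioc (0:ℝ) 1,
      f y * (deriv (deriv (φ t)) (X t y) / ρt t (X t y)) * ρ y with hAdef
  set B : ℝ := ∫ y in Set.Ioc (0:ℝ) 1,
      g y * (deriv (deriv (φ t)) (X t y) / ρt t (X t y)) * ρ y with hBdef
  set S : ℝ := ∫ x in Set.Ioc (0:ℝ) 1, (f x - g x) ^ 2 * ρ x with hSdef
  have hS_nonneg : 0 ≤ S :=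
    integral_nonneg fun x => mul_nonneg (sq_nonneg _) (hρpos x).le
  -- A − B = ∫ u w ρ
  have hAB : A - B = ∫ x in Set.Ioc (0:ℝ) 1, u x * w x * ρ x := by
    rw [hAdef, hBdef, ← integral_sub hfw hgw]
    congr 1; funext x; simp only [hudef, hwdef, hqdef]; ring
  -- Cauchy–Schwarz
  have hCS : (A - B) ^ 2 ≤ S * ∫ x in Set.Ioc (0:ℝ) 1, w x ^ 2 * ρ x := by
    rw [hAB, hSdef]
    have := cs_integral_weighted (μ := volume.restrict (Set.Ioc (0:ℝ) 1))
      u w ρ (fun x => (hρpos x).le) hu2 hw2 huw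
    simpa only [hudef] using this
  -- pushforward identity for the weight: ∫ w² ρ = ∫ q² ρt ≤ C² I
  have hpush_q : ∫ x in Set.Ioc (0:ℝ) 1, w x ^ 2 * ρ x
      = ∫ y in Set.Ioc (0:ℝ) 1, q y ^ 2 * ρt t y := by
    exact hpush t ht (fun y => q y ^ 2) (hq_cont.pow 2) (fun x => by
      simp only [hq_per x])
  have hq2_bound : ∫ y in Set.Ioc (0:ℝ) 1, q y ^ 2 * ρt t y ≤ C ^ 2 * I := by
    rw [hIdef, ← integral_const_mul _ _]
    refine setIntegral_mono_on
      (((hq_cont.pow 2).mul (hρtc t)).integrableOn_Ioc)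
      (hinv_int.const_mul _) measurableSet_Ioc (fun y _ => ?_)
    have hd2 : (deriv (deriv (φ t)) y) ^ 2 ≤ C ^ 2 := by
      nlinarith [hC t ht y, sq_abs (deriv (deriv (φ t)) y), abs_nonneg (deriv (deriv (φ t)) y)]
    have he : q y ^ 2 * ρt t y = (deriv (deriv (φ t)) y) ^ 2 * (ρt t y)⁻¹ := by
      simp only [hqdef, div_pow, div_eq_mul_inv, mul_inv, pow_two]
      have h0 := hρtne y
      field_simp
    rw [he]
    exact mul_le_mul_of_nonneg_right hd2 (inv_pos.mpr (hρtpos t y)).le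
  have hw2_le : ∫ x in Set.Ioc (0:ℝ) 1, w x ^ 2 * ρ x ≤ C ^ 2 * I := by
    rw [hpush_q]; exact hq2_bound
  -- torusHat computation: ∫ (H ∘ X)² ρ = I⁻¹
  have hH_cont : Continuous (torusHat (ρt t)) := by
    have : Continuous fun x => I * ρt t x := continuous_const.mul (hρtc t)
    exact this.inv₀ fun x => (mul_pos hI_pos (hρtpos t x)).ne'
  have hH_per : Function.Periodic (torusHat (ρt t)) 1 := by
    intro x; simp only [torusHat, hρtper t x]
  have hHint : ∫ x in Set.Ioc (0:ℝ) 1, (torusHat (ρt t) (X t x)) ^ 2 * ρ x = I⁻¹ := by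
    rw [hpush t ht (fun y => (torusHat (ρt t) y) ^ 2) (hH_cont.pow 2)
      (fun x => by simp only [hH_per x])]
    have he : ∀ y, (torusHat (ρt t) y) ^ 2 * ρt t y = (I ^ 2)⁻¹ * (ρt t y)⁻¹ := by
      intro y
      have h0 : ρt t y ≠ 0 := hρtne y
      have hIne : I ≠ 0 := hI_pos.ne'
      show ((I * ρt t y)⁻¹) ^ 2 * ρt t y = (I ^ 2)⁻¹ * (ρt t y)⁻¹
      rw [mul_inv, mul_pow, ← inv_pow]
      field_simp
    calc ∫ y in Set.Ioc (0:ℝ) 1, (torusHat (ρt t) y) ^ 2 * ρt t y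
        = ∫ y in Set.Ioc (0:ℝ) 1, (I ^ 2)⁻¹ * (ρt t y)⁻¹ := by
          exact setIntegral_congr_fun measurableSet_Ioc fun y _ => he y
      _ = (I ^ 2)⁻¹ * I := by rw [integral_const_mul _ _, ← hIdef]
      _ = I⁻¹ := by field_simp
  -- rewrite the LHS integral
  have hLHS : ∫ x in Set.Ioc (0:ℝ) 1,
      ((-A * torusHat (ρt t) (X t x)) - (-B * torusHat (ρt t) (X t x))) ^ 2 * ρ x
      = (A - B) ^ 2 * I⁻¹ := by
    have he : (fun x => ((-A * torusHat (ρt t) (X t x))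
        - (-B * torusHat (ρt t) (X t x))) ^ 2 * ρ x)
        = fun x => (A - B) ^ 2 * ((torusHat (ρt t) (X t x)) ^ 2 * ρ x) := by
      funext x; ring
    rw [he, integral_const_mul _ _, hHint]
  rw [hLHS]
  -- final computation
  have hfinal : (A - B) ^ 2 * I⁻¹ ≤ C ^ 2 * S := by
    have h1 : (A - B) ^ 2 ≤ S * (C ^ 2 * I) :=
      le_trans hCS (mul_le_mul_of_nonneg_left hw2_le hS_nonneg)
    have h2 : (A - B) ^ 2 * I⁻¹ ≤ S * (C ^ 2 * I) * I⁻¹ :=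
      mul_le_mul_of_nonneg_right h1 (inv_pos.mpr hI_pos).le
    calc (A - B) ^ 2 * I⁻¹ ≤ S * (C ^ 2 * I) * I⁻¹ := h2
      _ = C ^ 2 * S * (I * I⁻¹) := by ring
      _ = C ^ 2 * S := by rw [mul_inv_cancel₀ hI_pos.ne', mul_one]
  calc Real.sqrt ((A - B) ^ 2 * I⁻¹) ≤ Real.sqrt (C ^ 2 * S) :=
        Real.sqrt_le_sqrt hfinal
    _ = C * Real.sqrt S := by
        rw [Real.sqrt_mul (sq_nonneg C), Real.sqrt_sq hC0]
end

section
/- Suppose g : [0,1]×𝕋 → ℝ, (t,x) ↦ g_t(x), is continuously differentiable in t and in x and solves the parallel translation equation ∂_t g_t = −(∂ₓ g_t)(∂ₓ φ_t) + (∫_𝕋 (∂ₓ g_t)(∂ₓ φ_t) dx) · ρ̂_t on [0,1]×𝕋, where ρ_t are strictly positive continuous probability densities on 𝕋. Then ∫_𝕋 g_t(x) dx = ∫_𝕋 g_0(x) dx for all t ∈ [0,1]; in particular, if ∫_𝕋 g_0 dx = 0, then ∫_𝕋 g_t dx = 0 for all t, so each g_t is the derivative of a function on 𝕋 whenever g_0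 is. -/
open MeasureTheory Set

/-- A `C¹` solution `g` of the parallel-translation equation
`∂_t g_t = −(∂ₓ g_t)(∂ₓ φ_t) + (∫ (∂ₓ g_t)(∂ₓ φ_t) dx) ⬝ ρ̂_t`
has constant mean `∫ g_t dx`; in particular if `∫ g_0 dx = 0` then `∫ g_t dx = 0`
for all `t`, so each `g_t` is the derivative of a (periodic) function on the torus
whenever `g_0` is. -/
theorem parallel_translation_mean_invariant
    (φ : ℝ → ℝ → ℝ) (hφc : Continuous fun p : ℝ × ℝ => φ p.1 p.2)
    (hφsm : ∀ t, ContDiff ℝ (⊤ : ℕ∞) (φ t)) (hφper : ∀ t, Function.Periodic (φ t) 1)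
    -- ρ_t : strictly positive continuous probability densities on the torus
    (ρt : ℝ → ℝ → ℝ) (hρtc : ∀ t, Continuous (ρt t))
    (hρtper : ∀ t, Function.Periodic (ρt t) 1) (hρtpos : ∀ t x, 0 < ρt t x)
    (hρtone : ∀ t, ∫ x in Set.Ioc (0:ℝ) 1, ρt t x = 1)
    -- g : continuously differentiable in t and x, periodic in x
    (g : ℝ → ℝ → ℝ) (hgC1 : ContDiff ℝ 1 fun p : ℝ × ℝ => g p.1 p.2)
    (hgper : ∀ t, Function.Periodic (g t) 1)
    -- g solves the parallel-translation equation
    (hsol : ∀ t ∈ Icc (0:ℝ) 1, ∀ x,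
      HasDerivAt (fun s => g s x)
        (-(deriv (g t) x * deriv (φ t) x)
          + (∫ y in Set.Ioc (0:ℝ) 1, deriv (g t) y * deriv (φ t) y) * torusHat (ρt t) x) t) :
    (∀ t ∈ Icc (0:ℝ) 1,
        ∫ x in Set.Ioc (0:ℝ) 1, g t x = ∫ x in Set.Ioc (0:ℝ) 1, g 0 x) ∧
    ((∫ x in Set.Ioc (0:ℝ) 1, g 0 x) = 0 →
      ∀ t ∈ Icc (0:ℝ) 1, (∫ x in Set.Ioc (0:ℝ) 1, g t x) = 0 ∧
        ∃ ψ : ℝ → ℝ, Function.Periodic ψ 1 ∧ ∀ x, HasDerivAt ψ (g t x) x) := by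
  have hGdiff : Differentiable ℝ (fun p : ℝ × ℝ => g p.1 p.2) := hgC1.differentiable one_ne_zero
  have hgc : Continuous (fun p : ℝ × ℝ => g p.1 p.2) := hgC1.continuous
  have hgtc : ∀ t, Continuous (g t) := fun t =>
    hgc.comp (continuous_const.prodMk continuous_id)
  set dg : ℝ → ℝ → ℝ := fun t x => fderiv ℝ (fun p : ℝ × ℝ => g p.1 p.2) (t, x) (1, 0) with hdgdef
  have hderiv : ∀ t x, HasDerivAt (fun s => g s x) (dg t x) t := by
    intro t x
    have h1 : HasDerivAt (fun s : ℝ => (s, x)) ((1:ℝ), (0:ℝ)) t :=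
      (hasDerivAt_id t).prodMk (hasDerivAt_const t x)
    exact (hGdiff (t, x)).hasFDerivAt.comp_hasDerivAt t h1
  have hdgc : Continuous fun p : ℝ × ℝ => dg p.1 p.2 :=
    (hgC1.continuous_fderiv one_ne_zero).clm_apply continuous_const
  have hdgtc : ∀ t, Continuous (dg t) := fun t =>
    hdgc.comp (continuous_const.prodMk continuous_id)
  -- derivative of the mean
  have key : ∀ t : ℝ, HasDerivAt (fun s => ∫ x in Ioc (0:ℝ) 1, g s x)
      (∫ x in Ioc (0:ℝ) 1, dg t x) t := by
    intro t
    obtain ⟨C, hC⟩ :=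
      (isCompact_Icc.prod isCompact_Icc :
        IsCompact (Icc (t-1) (t+1) ×ˢ Icc (0:ℝ) 1)).exists_bound_of_continuousOn
        hdgc.continuousOn
    refine (hasDerivAt_integral_of_dominated_loc_of_deriv_le (s := Metric.ball t 1)
      (F := fun s x => g s x) (F' := fun s x => dg s x) (bound := fun _ => C)
      (Metric.ball_mem_nhds t one_pos) ?_ ?_ ?_ ?_ ?_ ?_).2
    · exact Filter.Eventually.of_forall fun s =>
        ((hgtc s).aestronglyMeasurable : AEStronglyMeasurable (g s) _)
    · exact (hgtc t).integrableOn_Ioc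
    · exact (hdgtc t).aestronglyMeasurable
    · refine ae_restrict_of_forall_mem measurableSet_Ioc fun x hx s hs => ?_
      have hsmem : s ∈ Icc (t-1) (t+1) := by
        have := Metric.mem_ball.1 hs
        rw [Real.dist_eq, abs_lt] at this
        constructor <;> linarith [this.1, this.2]
      exact hC (s, x) (mem_prod.2 ⟨hsmem, ⟨hx.1.le, hx.2⟩⟩)
    · exact integrableOn_const measure_Ioc_lt_top.ne
    · exact Filter.Eventually.of_forall fun x s _ => hderiv s x
  -- the derivative vanishes on [0,1]
  have hzero : ∀ t ∈ Icc (0:ℝ) 1, (∫ x in Ioc (0:ℝ) 1, dg t x) = 0 := by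
    intro t ht
    set h : ℝ → ℝ := fun x => deriv (g t) x * deriv (φ t) x with hh
    have hhc : Continuous h := by
      have h1 : ContDiff ℝ 1 (g t) := hgC1.comp (contDiff_const.prodMk contDiff_id)
      exact (h1.continuous_deriv le_rfl).mul ((hφsm t).continuous_deriv (by simp))
    set c : ℝ := ∫ y in Ioc (0:ℝ) 1, h y with hc
    set I : ℝ := ∫ y in Ioc (0:ℝ) 1, (ρt t y)⁻¹ with hI
    have hinvc : Continuous fun y => (ρt t y)⁻¹ :=
      (hρtc t).inv₀ fun y => (hρtpos t y).ne'
    have hIint : IntegrableOn (fun y => (ρt t y)⁻¹) (Ioc (0:ℝ) 1) := hinvc.integrableOn_Ioc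
    have hIpos : 0 < I := by
      rw [hI, ]
      rw [setIntegral_pos_iff_support_of_nonneg_ae]
      · have : (Function.support fun y => (ρt t y)⁻¹) = univ := by
          ext y; simp [Function.support, (hρtpos t y).ne']
        rw [this, univ_inter]
        simp [Real.volume_Ioc]
      · exact ae_restrict_of_forall_mem measurableSet_Ioc fun y _ =>
          (inv_pos.2 (hρtpos t y)).le
      · exact hIint
    have hHat : ∀ x, torusHat (ρt t) x = I⁻¹ * (ρt t x)⁻¹ := by
      intro x; simp [torusHat, ← hI, mul_inv, mul_comm]
    have hHatint : IntegrableOn (torusHat (ρt t)) (Ioc (0:ℝ) 1) := by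
      have : Continuous (torusHat (ρt t)) := by
        have := (continuous_const.mul hinvc : Continuous fun x => I⁻¹ * (ρt t x)⁻¹)
        convert this using 1; exact funext hHat
      exact this.integrableOn_Ioc
    have hHatone : (∫ x in Ioc (0:ℝ) 1, torusHat (ρt t) x) = 1 := by
      simp only [hHat]
      rw [integral_const_mul, ← hI, inv_mul_cancel₀ hIpos.ne']
    have heq : ∀ x, dg t x = -(h x) + c * torusHat (ρt t) x := fun x =>
      (hderiv t x).unique (hsol t ht x)
    calc (∫ x in Ioc (0:ℝ) 1, dg t x)
        = ∫ x in Ioc (0:ℝ) 1, (-(h x) + c * torusHat (ρt t) x) := by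
          simp only [heq]
      _ = (∫ x in Ioc (0:ℝ) 1, -(h x)) + ∫ x in Ioc (0:ℝ) 1, c * torusHat (ρt t) x := by
          exact integral_add (hhc.integrableOn_Ioc.neg) (hHatint.const_mul c)
      _ = -c + c * 1 := by rw [integral_neg, integral_const_mul, hHatone, hc]
      _ = 0 := by ring
  -- constancy of the mean
  have hconst : ∀ t ∈ Icc (0:ℝ) 1,
      (∫ x in Ioc (0:ℝ) 1, g t x) = ∫ x in Ioc (0:ℝ) 1, g 0 x := by
    have hcont : ContinuousOn (fun s => ∫ x in Ioc (0:ℝ) 1, g s x) (Icc (0:ℝ) 1) :=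
      (fun s _ => ((key s).differentiableAt.continuousAt).continuousWithinAt)
    exact constant_of_has_deriv_right_zero hcont fun s hs =>
      (hzero s (mem_Icc_of_Ico hs) ▸ (key s)).hasDerivWithinAt
  refine ⟨hconst, fun h0 t ht => ?_⟩
  have hFt : (∫ x in Ioc (0:ℝ) 1, g t x) = 0 := by rw [hconst t ht, h0]
  refine ⟨hFt, fun x => ∫ y in (0:ℝ)..x, g t y, ?_, fun x =>
    ((hgtc t).integral_hasStrictDerivAt 0 x).hasDerivAt⟩
  intro x
  have hadj : (∫ y in (0:ℝ)..x, g t y) + (∫ y in x..(x+1), g t y)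
      = ∫ y in (0:ℝ)..(x+1), g t y :=
    intervalIntegral.integral_add_adjacent_intervals
      ((hgtc t).intervalIntegrable _ _) ((hgtc t).intervalIntegrable _ _)
  have hper : (∫ y in x..(x+1), g t y) = ∫ y in (0:ℝ)..(0+1), g t y :=
    (hgper t).intervalIntegral_add_eq x 0
  have h01 : (∫ y in (0:ℝ)..1, g t y) = 0 := by
    rw [intervalIntegral.integral_of_le zero_le_one]; exact hFt
  show (∫ y in (0:ℝ)..(x+1), g t y) = ∫ y in (0:ℝ)..x, g t y
  rw [← hadj, hper]
  simp [h01]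
end

section
/- Suppose f : [0,1]×𝕋 → ℝ, (t,x) ↦ f_t(x), is continuously differentiable in (t,x) and solves ∂_t f_t = −(∫_𝕋 f_t(y) · (∂ₓ²φ_t/ρ_t)(X_t(y)) · ρ(y) dy) · ρ̂_t(X_t(·)). Then g_t := f_t ∘ X_t^{-1} solves the parallel translation equation ∂_t g_t = −(∫_𝕋 g_t(y) ∂ₓ²φ_t(y) dy) · ρ̂_t − (∂ₓ g_t)(∂ₓ φ_t) on [0,1]×𝕋. -/
open MeasureTheory Set

private lemma aux_hasDerivAt_snd {F : ℝ × ℝ → ℝ} (hF : ContDiff ℝ 1 F) (t x : ℝ) :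
    HasDerivAt (fun y => F (t, y)) ((fderiv ℝ F (t, x)) (0, 1)) x :=
  ((hF.differentiable one_ne_zero (t, x)).hasFDerivAt).comp_hasDerivAt x
    ((hasDerivAt_const x t).prodMk (hasDerivAt_id x))

private lemma aux_hasDerivAt_fst {F : ℝ × ℝ → ℝ} (hF : ContDiff ℝ 1 F) (t x : ℝ) :
    HasDerivAt (fun s => F (s, x)) ((fderiv ℝ F (t, x)) (1, 0)) t :=
  ((hF.differentiable one_ne_zero (t, x)).hasFDerivAt).comp_hasDerivAt t
    ((hasDerivAt_id t).prodMk (hasDerivAt_const t x))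

private lemma aux_map_one_D (L : ℝ × ℝ →L[ℝ] ℝ) (D : ℝ) :
    L (1, D) = L (1, 0) + D * L (0, 1) := by
  have h : ((1:ℝ), D) = (1, 0) + D • ((0:ℝ), (1:ℝ)) := by
    simp [Prod.ext_iff]
  rw [h, map_add, L.map_smul, smul_eq_mul]

private lemma aux_periodic_deriv {f : ℝ → ℝ} (hf : Function.Periodic f 1) :
    Function.Periodic (deriv f) 1 := by
  intro x
  have h : (fun y => f (y + 1)) = f := funext hf
  rw [← deriv_comp_add_const, h]

/-- If `f` solves
`∂_t f_t = −(∫ f_t(y) (∂ₓ²φ_t/ρ_t)(X_t(y)) ρ(y) dy) ⬝ ρ̂_t(X_t(·))`,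
then `g_t := f_t ∘ X_t⁻¹` solves the parallel translation equation
`∂_t g_t = −(∫ g_t(y) ∂ₓ²φ_t(y) dy) ⬝ ρ̂_t − (∂ₓ g_t)(∂ₓ φ_t)`. -/
theorem pullback_solution_solves_parallel_translation_equation
    (φ : ℝ → ℝ → ℝ) (hφc : Continuous fun p : ℝ × ℝ => φ p.1 p.2)
    (hφsm : ∀ t, ContDiff ℝ (⊤ : ℕ∞) (φ t)) (hφper : ∀ t, Function.Periodic (φ t) 1)
    -- the flow X_t of ∂ₓφ_t and its inverse, both C¹ in (t,x)
    (X : ℝ → ℝ → ℝ) (hX0 : ∀ x, X 0 x = x)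
    (hXC1 : ContDiff ℝ 1 fun p : ℝ × ℝ => X p.1 p.2)
    (hXper : ∀ t x, X t (x + 1) = X t x + 1)
    (hXflow : ∀ t ∈ Icc (0:ℝ) 1, ∀ x, HasDerivAt (fun s => X s x) (deriv (φ t) (X t x)) t)
    (Xinv : ℝ → ℝ → ℝ) (hXinvC1 : ContDiff ℝ 1 fun p : ℝ × ℝ => Xinv p.1 p.2)
    (hXinv : ∀ t x, Xinv t (X t x) = x) (hXinv' : ∀ t x, X t (Xinv t x) = x)
    -- the initial density ρ and the densities ρ_t of (X_t)_#(ρ dx)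
    (ρ : ℝ → ℝ) (hρsm : ContDiff ℝ (⊤ : ℕ∞) ρ) (hρper : Function.Periodic ρ 1)
    (hρpos : ∀ x, 0 < ρ x) (hρone : ∫ x in Set.Ioc (0:ℝ) 1, ρ x = 1)
    (ρt : ℝ → ℝ → ℝ) (hρtc : ∀ t, Continuous (ρt t))
    (hρtper : ∀ t, Function.Periodic (ρt t) 1) (hρtpos : ∀ t x, 0 < ρt t x)
    (hpush : ∀ t ∈ Icc (0:ℝ) 1, ∀ h : ℝ → ℝ, Continuous h → Function.Periodic h 1 →
      ∫ x in Set.Ioc (0:ℝ) 1, h (X t x) * ρ x = ∫ x in Set.Ioc (0:ℝ) 1, h x * ρt t x)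
    -- f is continuously differentiable in (t,x), periodic in x, and solves the equation
    (f : ℝ → ℝ → ℝ) (hfC1 : ContDiff ℝ 1 fun p : ℝ × ℝ => f p.1 p.2)
    (hfper : ∀ t, Function.Periodic (f t) 1)
    (hsol : ∀ t ∈ Icc (0:ℝ) 1, ∀ x,
      HasDerivAt (fun s => f s x)
        (-(∫ y in Set.Ioc (0:ℝ) 1,
              f t y * (deriv (deriv (φ t)) (X t y) / ρt t (X t y)) * ρ y)
          * torusHat (ρt t) (X t x)) t) :
    -- then g_t := f_t ∘ X_t⁻¹ solves the parallel translation equation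
    ∀ t ∈ Icc (0:ℝ) 1, ∀ x,
      HasDerivAt (fun s => f s (Xinv s x))
        (-(∫ y in Set.Ioc (0:ℝ) 1, f t (Xinv t y) * deriv (deriv (φ t)) y)
            * torusHat (ρt t) x
          - deriv (fun y => f t (Xinv t y)) x * deriv (φ t) x) t := by
  intro t ht x
  have hXz : X t (Xinv t x) = x := hXinv' t x
  set z := Xinv t x with hz
  set F : ℝ × ℝ → ℝ := fun p => f p.1 p.2 with hFdef
  set G : ℝ × ℝ → ℝ := fun p => X p.1 p.2 with hGdef
  set Xi : ℝ × ℝ → ℝ := fun p => Xinv p.1 p.2 with hXidef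
  -- derivative of s ↦ Xinv s x
  set D := (fderiv ℝ Xi (t, x)) (1, 0) with hDdef
  have hu : HasDerivAt (fun s => Xinv s x) D t := aux_hasDerivAt_fst hXinvC1 t x
  have hcurve : HasDerivAt (fun s => ((s : ℝ), Xinv s x)) (1, D) t :=
    (hasDerivAt_id t).prodMk hu
  -- chain rule for s ↦ X s (Xinv s x) = x
  have hgx : HasDerivAt (fun s => X s (Xinv s x)) ((fderiv ℝ G (t, z)) (1, D)) t :=
    by have hh := ((hXC1.differentiable one_ne_zero (t, z)).hasFDerivAt).comp_hasDerivAt t hcurve; exact hh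
  have hconst : HasDerivAt (fun s => X s (Xinv s x)) 0 t := by
    have h : (fun s => X s (Xinv s x)) = fun _ => x := funext fun s => hXinv' s x
    rw [h]; exact hasDerivAt_const t x
  have h0 : (fderiv ℝ G (t, z)) (1, D) = 0 := hgx.unique hconst
  -- partial derivatives of X
  set A1 := (fderiv ℝ G (t, z)) (1, 0) with hA1def
  set A2 := (fderiv ℝ G (t, z)) (0, 1) with hA2def
  have hA1 : A1 = deriv (φ t) x := by
    have h1 : HasDerivAt (fun s => X s z) A1 t := aux_hasDerivAt_fst hXC1 t z
    have h2 := hXflow t ht z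
    rw [hXz] at h2
    exact h1.unique h2
  have hA2at : HasDerivAt (fun y => X t y) A2 z := aux_hasDerivAt_snd hXC1 t z
  -- spatial derivative of Xinv
  set B2 := (fderiv ℝ Xi (t, x)) (0, 1) with hB2def
  have hB2at : HasDerivAt (fun y => Xinv t y) B2 x := aux_hasDerivAt_snd hXinvC1 t x
  have hAB : A2 * B2 = 1 := by
    have h1 : HasDerivAt (fun y => X t (Xinv t y)) (A2 * B2) x := hA2at.comp x hB2at
    have h2 : HasDerivAt (fun y => X t (Xinv t y)) 1 x := by
      have h : (fun y => X t (Xinv t y)) = fun y => y := funext fun y => hXinv' t y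
      rw [h]; exact hasDerivAt_id x
    exact h1.unique h2
  -- spatial derivative of f and of g = f ∘ Xinv
  set C1 := (fderiv ℝ F (t, z)) (1, 0) with hC1def
  set C2 := (fderiv ℝ F (t, z)) (0, 1) with hC2def
  have hC2at : HasDerivAt (fun y => f t y) C2 z := aux_hasDerivAt_snd hfC1 t z
  have hgd : HasDerivAt (fun y => f t (Xinv t y)) (C2 * B2) x := hC2at.comp x hB2at
  have hgderiv : deriv (fun y => f t (Xinv t y)) x = C2 * B2 := hgd.deriv
  -- time derivative of f at (t, z)
  have hC1 : C1 = -(∫ y in Set.Ioc (0:ℝ) 1,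
      f t y * (deriv (deriv (φ t)) (X t y) / ρt t (X t y)) * ρ y) * torusHat (ρt t) x := by
    have h1 : HasDerivAt (fun s => f s z) C1 t := aux_hasDerivAt_fst hfC1 t z
    have h2 := hsol t ht z
    rw [hXz] at h2
    exact h1.unique h2
  -- the integral identity via the pushforward property
  have hone : Continuous (deriv (deriv (φ t))) := by
    have hphiinf : ContDiff ℝ (((⊤:ℕ∞)) : WithTop ℕ∞) (φ t) := (hφsm t).of_le (by simp)
    have h1 := (contDiff_infty_iff_deriv.mp hphiinf).2
    exact (contDiff_infty_iff_deriv.mp h1).2.continuous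
  have hXinvper : ∀ y, Xinv t (y + 1) = Xinv t y + 1 := by
    intro y
    have : X t (Xinv t y + 1) = y + 1 := by rw [hXper, hXinv']
    calc Xinv t (y + 1) = Xinv t (X t (Xinv t y + 1)) := by rw [this]
      _ = Xinv t y + 1 := hXinv t _
  have hIJ : (∫ y in Set.Ioc (0:ℝ) 1,
        f t y * (deriv (deriv (φ t)) (X t y) / ρt t (X t y)) * ρ y)
      = ∫ y in Set.Ioc (0:ℝ) 1, f t (Xinv t y) * deriv (deriv (φ t)) y := by
    set h : ℝ → ℝ := fun y => f t (Xinv t y) * (deriv (deriv (φ t)) y / ρt t y) with hhdef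
    have hXinvc : Continuous (fun y => Xinv t y) :=
      hXinvC1.continuous.comp (continuous_const.prodMk continuous_id)
    have hftc : Continuous (f t) :=
      hfC1.continuous.comp (continuous_const.prodMk continuous_id)
    have hc : Continuous h := by
      apply Continuous.mul (hftc.comp hXinvc)
      exact hone.div (hρtc t) (fun y => (hρtpos t y).ne')
    have hper : Function.Periodic h 1 := by
      intro y
      simp only [hhdef]
      rw [hXinvper y, hfper t, aux_periodic_deriv (aux_periodic_deriv (hφper t)), hρtper t]
    have key := hpush t ht h hc hper
    have hL : (∫ y in Set.Ioc (0:ℝ) 1, h (X t y) * ρ y)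
        = ∫ y in Set.Ioc (0:ℝ) 1,
            f t y * (deriv (deriv (φ t)) (X t y) / ρt t (X t y)) * ρ y := by
      apply integral_congr_ae
      filter_upwards with y
      simp only [hhdef, hXinv t y]
    have hR : (∫ y in Set.Ioc (0:ℝ) 1, h y * ρt t y)
        = ∫ y in Set.Ioc (0:ℝ) 1, f t (Xinv t y) * deriv (deriv (φ t)) y := by
      apply integral_congr_ae
      filter_upwards with y
      simp only [hhdef]
      field_simp [(hρtpos t y).ne']
    rw [← hL, key, hR]
  -- the main chain rule
  have hmain : HasDerivAt (fun s => f s (Xinv s x)) ((fderiv ℝ F (t, z)) (1, D)) t :=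
    by have hh := ((hfC1.differentiable one_ne_zero (t, z)).hasFDerivAt).comp_hasDerivAt t hcurve; exact hh
  have hexp : (fderiv ℝ F (t, z)) (1, D) = C1 + D * C2 := aux_map_one_D _ _
  have hexp0 : A1 + D * A2 = 0 := by rw [← aux_map_one_D]; exact h0
  have hDA2 : D * A2 = -deriv (φ t) x := by rw [hA1] at hexp0; linarith
  -- conclude
  have hfinal : (fderiv ℝ F (t, z)) (1, D)
      = -(∫ y in Set.Ioc (0:ℝ) 1, f t (Xinv t y) * deriv (deriv (φ t)) y)
          * torusHat (ρt t) x
        - deriv (fun y => f t (Xinv t y)) x * deriv (φ t) x := by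
    rw [hexp, hC1, hIJ, hgderiv]
    have hDC : D * C2 = -(C2 * B2 * deriv (φ t) x) := by
      linear_combination (C2 * B2) * hDA2 - (D * C2) * hAB
    linarith [hDC]
  rw [← hfinal]
  exact hmain
end

section
/- For k ≥ 1 let φ_{2k−1}(x) = sin(kx)/k and φ_{2k}(x) = −cos(kx)/k on 𝕋. Let T : 𝕋 → 𝕋 be a Borel bijection with Borel inverse and ρ a strictly positive continuous probability density on 𝕋 such that T_#(ρ dx) has strictly positive continuous density ρ_T. For each index j ∈ {2k−1, 2k}, define a_j(x) := (∂ₓ²φ_j/ρ_T)(T(x)), b_j(x) := (∂ₓ(∂ₓ²φ_j · ∂ₓφ_j)/ρ_T)(T(x)), Λ_j(f) := −(∫_𝕋 f a_j ρ dx) · (ρ̂_T ∘ T) and Θ_j(f) := −(1/2)(∫_𝕋 f a_j ρ dx) · ((ρ̂_T · ∂ₓ²φ_j) ∘ T) − (1/2)(∫_𝕋 f b_j ρ dx) · (ρ̂_T ∘ T) + (3/2)(∫_𝕋 f a_j ρ dx) · (∫_𝕋 ∂ₓ²φ_j ρ̂_T dx) · (ρ̂_T ∘ T). Then for every f ∈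 L²(ρ dx): ‖Λ_j(f)‖_{L²(ρ dx)} ≤ k‖f‖_{L²(ρ dx)} and ‖Θ_j(f)‖_{L²(ρ dx)} ≤ 3k²‖f‖_{L²(ρ dx)}. -/
/-!
Write `I = ∫ ρ_T⁻¹` and `‖·‖` for the norm of `L²(ρ dx)`. Since `T_#(ρ dx) = ρ_T dx`, an integral
against `ρ` of a function of `T x` equals the same integral against `ρ_T`. By Cauchy–Schwarz the
coefficient `∫ f (w / ρ_T) ∘ T ρ` is then at most `‖f‖ · (∫ w² / ρ_T)^{1/2} ≤ sup|w| · √I · ‖f‖`,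
while `‖(P · ρ̂_T) ∘ T‖ ≤ sup|P| / √I` because `∫ ρ̂_T² ρ_T = 1 / I`; the factors `√I` cancel.
For `Θ_j` one also uses `|∫ ∂ₓ²φ_j ρ̂_T| ≤ k`, as `∫ ρ̂_T = 1`, and the three terms add up to
`(1/2 + 1/2 + 3/2) k² ≤ 3 k²`.
-/

open MeasureTheory Set

section WeightedIntegral

variable {α : Type*} [MeasurableSpace α] {ν : Measure α} {ρ : α → ℝ}

theorem abs_integral_mul_le_sqrt_mul_sqrt {μ : Measure α} {u v : α → ℝ}
    (hu : MemLp u 2 μ) (hv : MemLp v 2 μ) :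
    |∫ x, u x * v x ∂μ| ≤ √(∫ x, u x ^ 2 ∂μ) * √(∫ x, v x ^ 2 ∂μ) := by
  have hsq : ∀ w : α → ℝ, ∫ x, ‖w x‖ ^ (2 : ℝ) ∂μ = ∫ x, w x ^ 2 ∂μ := fun w => by
    simp only [Real.rpow_two, Real.norm_eq_abs, sq_abs]
  calc |∫ x, u x * v x ∂μ| ≤ ∫ x, ‖u x‖ * ‖v x‖ ∂μ := by
        simpa only [Real.norm_eq_abs, abs_mul] using
          norm_integral_le_integral_norm (μ := μ) fun x => u x * v x
    _ ≤ (∫ x, ‖u x‖ ^ (2 : ℝ) ∂μ) ^ (1 / 2 : ℝ) * (∫ x, ‖v x‖ ^ (2 : ℝ) ∂μ) ^ (1 / 2 : ℝ) :=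
        integral_mul_norm_le_Lp_mul_Lq .two_two (by simpa using hu) (by simpa using hv)
    _ = √(∫ x, u x ^ 2 ∂μ) * √(∫ x, v x ^ 2 ∂μ) := by
        rw [hsq, hsq, Real.sqrt_eq_rpow, Real.sqrt_eq_rpow]

variable (hρm : Measurable ρ) (hρ : ∀ x, 0 ≤ ρ x)
include hρm hρ

theorem integral_withDensity_ofReal (F : α → ℝ) :
    ∫ x, F x ∂ν.withDensity (fun x => ENNReal.ofReal (ρ x)) = ∫ x, F x * ρ x ∂ν := by
  rw [integral_withDensity_eq_integral_toReal_smul hρm.ennreal_ofReal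
    (ae_of_all _ fun _ => ENNReal.ofReal_lt_top)]
  simp only [ENNReal.toReal_ofReal (hρ _), smul_eq_mul, mul_comm]

theorem integrable_withDensity_ofReal_iff {F : α → ℝ} :
    Integrable F (ν.withDensity fun x => ENNReal.ofReal (ρ x)) ↔
      Integrable (fun x => F x * ρ x) ν := by
  rw [integrable_withDensity_iff_integrable_smul' hρm.ennreal_ofReal
    (ae_of_all _ fun _ => ENNReal.ofReal_lt_top)]
  simp only [ENNReal.toReal_ofReal (hρ _), smul_eq_mul, mul_comm]

theorem memLp_two_withDensity_ofReal_iff {u : α → ℝ} (hu : Measurable u) :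
    MemLp u 2 (ν.withDensity fun x => ENNReal.ofReal (ρ x)) ↔
      Integrable (fun x => u x ^ 2 * ρ x) ν := by
  rw [memLp_two_iff_integrable_sq hu.aestronglyMeasurable,
    integrable_withDensity_ofReal_iff hρm hρ]

theorem abs_integral_mul_mul_le_sqrt_mul_sqrt {u v : α → ℝ} (hu : Measurable u)
    (hv : Measurable v) (hu2 : Integrable (fun x => u x ^ 2 * ρ x) ν)
    (hv2 : Integrable (fun x => v x ^ 2 * ρ x) ν) :
    |∫ x, u x * v x * ρ x ∂ν| ≤ √(∫ x, u x ^ 2 * ρ x ∂ν) * √(∫ x, v x ^ 2 * ρ x ∂ν) := by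
  simp only [← integral_withDensity_ofReal hρm hρ]
  exact abs_integral_mul_le_sqrt_mul_sqrt
    ((memLp_two_withDensity_ofReal_iff hρm hρ hu).2 hu2)
    ((memLp_two_withDensity_ofReal_iff hρm hρ hv).2 hv2)

end WeightedIntegral

section Pushforward

variable {α : Type*} [MeasurableSpace α] {ν : Measure α} {T : α → α} {ρ ρT : α → ℝ}
  (hT : Measurable T) (hρm : Measurable ρ) (hρ : ∀ x, 0 ≤ ρ x)
  (hρTm : Measurable ρT) (hρT : ∀ x, 0 ≤ ρT x)
  (hpush : (ν.withDensity fun x => ENNReal.ofReal (ρ x)).map T =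
    ν.withDensity fun x => ENNReal.ofReal (ρT x))
include hT hρm hρ hρTm hρT hpush

theorem integral_comp_mul_eq_of_map_withDensity {w : α → ℝ} (hw : Measurable w) :
    ∫ x, w (T x) * ρ x ∂ν = ∫ x, w x * ρT x ∂ν := by
  rw [← integral_withDensity_ofReal hρm hρ, ← integral_withDensity_ofReal hρTm hρT, ← hpush,
    integral_map hT.aemeasurable hw.aestronglyMeasurable]

theorem integrable_comp_mul_iff_of_map_withDensity {w : α → ℝ} (hw : Measurable w) :
    Integrable (fun x => w (T x) * ρ x) ν ↔ Integrable (fun x => w x * ρT x) ν := by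
  rw [← integrable_withDensity_ofReal_iff hρm hρ, ← integrable_withDensity_ofReal_iff hρTm hρT,
    ← hpush, integrable_map_measure hw.aestronglyMeasurable hT.aemeasurable]
  rfl

theorem abs_integral_mul_comp_mul_le {f v : α → ℝ} (hf : Measurable f) (hv : Measurable v)
    (hf2 : Integrable (fun x => f x ^ 2 * ρ x) ν) (hv2 : Integrable (fun x => v x ^ 2 * ρT x) ν) :
    |∫ x, f x * v (T x) * ρ x ∂ν| ≤ √(∫ x, f x ^ 2 * ρ x ∂ν) * √(∫ x, v x ^ 2 * ρT x ∂ν) := by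
  have hvT : Integrable (fun x => v (T x) ^ 2 * ρ x) ν :=
    (integrable_comp_mul_iff_of_map_withDensity hT hρm hρ hρTm hρT hpush (hv.pow_const 2)).2 hv2
  rw [← integral_comp_mul_eq_of_map_withDensity hT hρm hρ hρTm hρT hpush (hv.pow_const 2)]
  exact abs_integral_mul_mul_le_sqrt_mul_sqrt hρm hρ hf (hv.comp hT) hf2 hvT

end Pushforward

section TorusHat

variable {σ : ℝ → ℝ} (hσc : Continuous σ) (hσ : ∀ x, 0 < σ x)
include hσc hσ

theorem integral_Ioc_inv_pos : 0 < ∫ y in Ioc (0:ℝ) 1, (σ y)⁻¹ := by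
  rw [← intervalIntegral.integral_of_le zero_le_one]
  exact intervalIntegral.intervalIntegral_pos_of_pos_on
    ((hσc.inv₀ fun x => (hσ x).ne').intervalIntegrable _ _) (fun x _ => inv_pos.2 (hσ x))
    zero_lt_one

theorem torusHat_pos (x : ℝ) : 0 < torusHat σ x :=
  inv_pos.2 (mul_pos (integral_Ioc_inv_pos hσc hσ) (hσ x))

theorem continuous_torusHat : Continuous (torusHat σ) :=
  (continuous_const.mul hσc).inv₀ fun x => (mul_pos (integral_Ioc_inv_pos hσc hσ) (hσ x)).ne'

theorem integral_torusHat : ∫ x in Ioc (0:ℝ) 1, torusHat σ x = 1 := by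
  simp only [torusHat, mul_inv]
  rw [integral_const_mul, inv_mul_cancel₀ (integral_Ioc_inv_pos hσc hσ).ne']

theorem integral_torusHat_sq_mul :
    ∫ x in Ioc (0:ℝ) 1, torusHat σ x ^ 2 * σ x = (∫ y in Ioc (0:ℝ) 1, (σ y)⁻¹)⁻¹ := by
  set I := ∫ y in Ioc (0:ℝ) 1, (σ y)⁻¹
  have hI : I ≠ 0 := (integral_Ioc_inv_pos hσc hσ).ne'
  have h : ∀ x, torusHat σ x ^ 2 * σ x = I⁻¹ ^ 2 * (σ x)⁻¹ := fun x => by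
    change (I * σ x)⁻¹ ^ 2 * σ x = _
    field_simp [(hσ x).ne']
  simp only [h]
  rw [integral_const_mul, sq, mul_assoc, inv_mul_cancel₀ hI, mul_one]

theorem abs_integral_mul_torusHat_le {w : ℝ → ℝ} (hw : Continuous w) {K : ℝ}
    (hwK : ∀ x, |w x| ≤ K) : |∫ x in Ioc (0:ℝ) 1, w x * torusHat σ x| ≤ K := by
  have hhat := continuous_torusHat hσc hσ
  calc |∫ x in Ioc (0:ℝ) 1, w x * torusHat σ x|
      ≤ ∫ x in Ioc (0:ℝ) 1, |w x * torusHat σ x| := abs_integral_le_integral_abs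
    _ ≤ ∫ x in Ioc (0:ℝ) 1, K * torusHat σ x := by
        refine integral_mono (hw.mul hhat).abs.integrableOn_Ioc
          (hhat.integrableOn_Ioc.const_mul K) fun x => ?_
        rw [abs_mul, abs_of_pos (torusHat_pos hσc hσ x)]
        exact mul_le_mul_of_nonneg_right (hwK x) (torusHat_pos hσc hσ x).le
    _ = K := by rw [integral_const_mul, integral_torusHat hσc hσ, mul_one]

theorem integral_div_sq_mul_le {w : ℝ → ℝ} (hw : Continuous w) {K : ℝ}
    (hwK : ∀ x, |w x| ≤ K) :
    ∫ x in Ioc (0:ℝ) 1, (w x / σ x) ^ 2 * σ x ≤ K ^ 2 * ∫ y in Ioc (0:ℝ) 1, (σ y)⁻¹ := by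
  have hσinv : Continuous fun x => (σ x)⁻¹ := hσc.inv₀ fun x => (hσ x).ne'
  rw [← integral_const_mul]
  refine integral_mono (((hw.div hσc fun x => (hσ x).ne').pow 2).mul hσc).integrableOn_Ioc
    (hσinv.integrableOn_Ioc.const_mul _) fun x => ?_
  have h : (w x / σ x) ^ 2 * σ x = w x ^ 2 * (σ x)⁻¹ := by field_simp [(hσ x).ne']
  rw [h]
  exact mul_le_mul_of_nonneg_right (sq_le_sq' (abs_le.1 (hwK x)).1 (abs_le.1 (hwK x)).2)
    (inv_pos.2 (hσ x)).le

end TorusHat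

section TorusPushforward

variable {T ρ ρT : ℝ → ℝ} (hT : Measurable T) (hρc : Continuous ρ) (hρ : ∀ x, 0 < ρ x)
  (hρTc : Continuous ρT) (hρT : ∀ x, 0 < ρT x)
  (hpush : Measure.map T
      ((volume.restrict (Ioc (0:ℝ) 1)).withDensity fun x => ENNReal.ofReal (ρ x))
    = (volume.restrict (Ioc (0:ℝ) 1)).withDensity fun x => ENNReal.ofReal (ρT x))
include hT hρc hρ hρTc hρT hpush

theorem abs_integral_mul_div_comp_le {f w : ℝ → ℝ} (hf : Measurable f)
    (hf2 : IntegrableOn (fun x => f x ^ 2 * ρ x) (Ioc (0:ℝ) 1)) (hw : Continuous w) {K : ℝ}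
    (hwK : ∀ x, |w x| ≤ K) :
    |∫ y in Ioc (0:ℝ) 1, f y * (w (T y) / ρT (T y)) * ρ y| ≤
      K * √(∫ y in Ioc (0:ℝ) 1, (ρT y)⁻¹) * √(∫ x in Ioc (0:ℝ) 1, f x ^ 2 * ρ x) := by
  have hv : Continuous fun z => w z / ρT z := hw.div hρTc fun z => (hρT z).ne'
  have hK : 0 ≤ K := (abs_nonneg _).trans (hwK 0)
  calc |∫ y in Ioc (0:ℝ) 1, f y * (w (T y) / ρT (T y)) * ρ y|
      ≤ √(∫ x in Ioc (0:ℝ) 1, f x ^ 2 * ρ x) *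
          √(∫ x in Ioc (0:ℝ) 1, (w x / ρT x) ^ 2 * ρT x) :=
        abs_integral_mul_comp_mul_le hT hρc.measurable (fun x => (hρ x).le) hρTc.measurable
          (fun x => (hρT x).le) hpush hf hv.measurable hf2 ((hv.pow 2).mul hρTc).integrableOn_Ioc
    _ ≤ √(∫ x in Ioc (0:ℝ) 1, f x ^ 2 * ρ x) * √(K ^ 2 * ∫ y in Ioc (0:ℝ) 1, (ρT y)⁻¹) := by
        gcongr
        exact integral_div_sq_mul_le hρTc hρT hw hwK
    _ = K * √(∫ y in Ioc (0:ℝ) 1, (ρT y)⁻¹) * √(∫ x in Ioc (0:ℝ) 1, f x ^ 2 * ρ x) := by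
        rw [Real.sqrt_mul (sq_nonneg K), Real.sqrt_sq hK, mul_comm]

theorem sqrt_integral_sq_mul_torusHat_comp_le {P : ℝ → ℝ} (hP : Continuous P) {M : ℝ}
    (hPM : ∀ x, |P x| ≤ M) :
    √(∫ x in Ioc (0:ℝ) 1, (P (T x) * torusHat ρT (T x)) ^ 2 * ρ x) ≤
      M / √(∫ y in Ioc (0:ℝ) 1, (ρT y)⁻¹) := by
  have hhat := continuous_torusHat hρTc hρT
  have hM : 0 ≤ M := (abs_nonneg _).trans (hPM 0)
  rw [integral_comp_mul_eq_of_map_withDensity hT hρc.measurable (fun x => (hρ x).le)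
    hρTc.measurable (fun x => (hρT x).le) hpush (w := fun z => (P z * torusHat ρT z) ^ 2)
    ((hP.mul hhat).pow 2).measurable]
  calc √(∫ x in Ioc (0:ℝ) 1, (P x * torusHat ρT x) ^ 2 * ρT x)
      ≤ √(∫ x in Ioc (0:ℝ) 1, M ^ 2 * (torusHat ρT x ^ 2 * ρT x)) := by
        refine Real.sqrt_le_sqrt (integral_mono (((hP.mul hhat).pow 2).mul hρTc).integrableOn_Ioc
          (((hhat.pow 2).mul hρTc).integrableOn_Ioc.const_mul _) fun x => ?_)
        rw [mul_pow, mul_assoc]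
        exact mul_le_mul_of_nonneg_right (sq_le_sq' (abs_le.1 (hPM x)).1 (abs_le.1 (hPM x)).2)
          (mul_nonneg (sq_nonneg _) (hρT x).le)
    _ = M / √(∫ y in Ioc (0:ℝ) 1, (ρT y)⁻¹) := by
        rw [integral_const_mul, integral_torusHat_sq_mul hρTc hρT, Real.sqrt_mul (sq_nonneg M),
          Real.sqrt_sq hM, Real.sqrt_inv, div_eq_mul_inv]

section Operators

variable {f g : ℝ → ℝ} (hf : Measurable f)
  (hf2 : IntegrableOn (fun x => f x ^ 2 * ρ x) (Ioc (0:ℝ) 1))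
  (hg : Continuous g) {K : ℝ} (hgK : ∀ x, |g x| ≤ K)
include hf hf2 hg hgK

theorem sqrt_integral_sq_Lambda_le :
    √(∫ x in Ioc (0:ℝ) 1,
        (-(∫ y in Ioc (0:ℝ) 1, f y * (g (T y) / ρT (T y)) * ρ y) * torusHat ρT (T x)) ^ 2 * ρ x)
      ≤ K * √(∫ x in Ioc (0:ℝ) 1, f x ^ 2 * ρ x) := by
  set A := ∫ y in Ioc (0:ℝ) 1, f y * (g (T y) / ρT (T y)) * ρ y
  set N := √(∫ x in Ioc (0:ℝ) 1, f x ^ 2 * ρ x)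
  set J := √(∫ y in Ioc (0:ℝ) 1, (ρT y)⁻¹)
  have hJ : 0 < J := Real.sqrt_pos.2 (integral_Ioc_inv_pos hρTc hρT)
  calc _ ≤ |A| / J :=
        sqrt_integral_sq_mul_torusHat_comp_le hT hρc hρ hρTc hρT hpush (P := fun _ => -A)
          continuous_const fun _ => (abs_neg A).le
    _ ≤ K * J * N / J := by
        gcongr
        exact abs_integral_mul_div_comp_le hT hρc hρ hρTc hρT hpush hf hf2 hg hgK
    _ = K * N := by
        field_simp

theorem sqrt_integral_sq_Theta_le {h : ℝ → ℝ} (hh : Continuous h) (hhK : ∀ x, |h x| ≤ K ^ 2) :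
    √(∫ x in Ioc (0:ℝ) 1,
        (-(1/2) * (∫ y in Ioc (0:ℝ) 1, f y * (g (T y) / ρT (T y)) * ρ y)
            * (torusHat ρT (T x) * g (T x))
          - (1/2) * (∫ y in Ioc (0:ℝ) 1, f y * (h (T y) / ρT (T y)) * ρ y) * torusHat ρT (T x)
          + (3/2) * (∫ y in Ioc (0:ℝ) 1, f y * (g (T y) / ρT (T y)) * ρ y)
            * (∫ y in Ioc (0:ℝ) 1, g y * torusHat ρT y) * torusHat ρT (T x)) ^ 2 * ρ x)
      ≤ 3 * K ^ 2 * √(∫ x in Ioc (0:ℝ) 1, f x ^ 2 * ρ x) := by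
  set A := ∫ y in Ioc (0:ℝ) 1, f y * (g (T y) / ρT (T y)) * ρ y
  set B := ∫ y in Ioc (0:ℝ) 1, f y * (h (T y) / ρT (T y)) * ρ y
  set C := ∫ y in Ioc (0:ℝ) 1, g y * torusHat ρT y
  set N := √(∫ x in Ioc (0:ℝ) 1, f x ^ 2 * ρ x)
  set J := √(∫ y in Ioc (0:ℝ) 1, (ρT y)⁻¹)
  have hJ : 0 < J := Real.sqrt_pos.2 (integral_Ioc_inv_pos hρTc hρT)
  have hK : 0 ≤ K := (abs_nonneg _).trans (hgK 0)
  have hN : 0 ≤ N := Real.sqrt_nonneg _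
  have hA : |A| ≤ K * J * N := abs_integral_mul_div_comp_le hT hρc hρ hρTc hρT hpush hf hf2 hg hgK
  have hB : |B| ≤ K ^ 2 * J * N :=
    abs_integral_mul_div_comp_le hT hρc hρ hρTc hρT hpush hf hf2 hh hhK
  have hC : |C| ≤ K := abs_integral_mul_torusHat_le hρTc hρT hg hgK
  set P : ℝ → ℝ := fun z => -(1/2) * A * g z - (1/2) * B + (3/2) * A * C
  have hP : ∀ z, |P z| ≤ 5/2 * K ^ 2 * J * N := fun z => by
    simp only [P]
    have hAg : |A * g z| ≤ K * J * N * K :=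
      abs_mul A (g z) ▸ mul_le_mul hA (hgK z) (abs_nonneg _) (by positivity)
    have hAC : |A * C| ≤ K * J * N * K :=
      abs_mul A C ▸ mul_le_mul hA hC (abs_nonneg _) (by positivity)
    rw [abs_le] at hAg hAC hB ⊢
    constructor <;> linarith
  calc _ = √(∫ x in Ioc (0:ℝ) 1, (P (T x) * torusHat ρT (T x)) ^ 2 * ρ x) := by
        congr 2; ext x; ring
    _ ≤ 5/2 * K ^ 2 * J * N / J :=
        sqrt_integral_sq_mul_torusHat_comp_le hT hρc hρ hρTc hρT hpush
          ((continuous_const.mul hg).sub continuous_const |>.add continuous_const) hP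
    _ ≤ 3 * K ^ 2 * N := by
        rw [mul_div_right_comm, mul_div_assoc, div_self hJ.ne', mul_one]
        nlinarith [mul_nonneg (sq_nonneg K) hN]

end Operators

end TorusPushforward

section TrigonometricPotentials

open Real

theorem deriv_sin_mul (c : ℝ) : deriv (fun x => sin (c * x)) = fun x => c * cos (c * x) := by
  funext x
  exact ((hasDerivAt_id' x).const_mul c).sin.deriv.trans (by ring)

theorem deriv_cos_mul (c : ℝ) : deriv (fun x => cos (c * x)) = fun x => -(c * sin (c * x)) := by
  funext x
  exact ((hasDerivAt_id' x).const_mul c).cos.deriv.trans (by ring)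

theorem deriv_const_mul_sin_mul (a c : ℝ) :
    deriv (fun x => a * sin (c * x)) = fun x => a * c * cos (c * x) := by
  funext x
  exact (((hasDerivAt_id' x).const_mul c).sin.const_mul a).deriv.trans (by ring)

theorem abs_mul_sin_le (a t : ℝ) : |a * sin t| ≤ |a| := by
  rw [abs_mul]; exact mul_le_of_le_one_right (abs_nonneg a) (abs_sin_le_one t)

theorem abs_mul_cos_le (a t : ℝ) : |a * cos t| ≤ |a| := by
  rw [abs_mul]; exact mul_le_of_le_one_right (abs_nonneg a) (abs_cos_le_one t)

section NonzeroFrequency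

variable {c : ℝ} (hc : c ≠ 0)
include hc

theorem deriv_sin_potential : deriv (fun x => sin (c * x) / c) = fun x => cos (c * x) := by
  funext x
  rw [(((hasDerivAt_id' x).const_mul c).sin.div_const c).deriv]
  field_simp

theorem deriv_cos_potential : deriv (fun x => -(cos (c * x) / c)) = fun x => sin (c * x) := by
  funext x
  exact (((hasDerivAt_id' x).const_mul c).cos.div_const c).neg.deriv.trans (by field_simp)

theorem deriv_deriv_sin_potential :
    deriv (deriv fun x => sin (c * x) / c) = fun x => -(c * sin (c * x)) := by
  rw [deriv_sin_potential hc, deriv_cos_mul]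

theorem deriv_deriv_cos_potential :
    deriv (deriv fun x => -(cos (c * x) / c)) = fun x => c * cos (c * x) := by
  rw [deriv_cos_potential hc, deriv_sin_mul]

theorem deriv_deriv_mul_deriv_sin_potential :
    deriv (fun z => deriv (deriv fun x => sin (c * x) / c) z *
        deriv (fun x => sin (c * x) / c) z) = fun x => -(c ^ 2 * cos (2 * c * x)) := by
  have h : (fun z => deriv (deriv fun x => sin (c * x) / c) z *
      deriv (fun x => sin (c * x) / c) z) = fun x => -(c / 2) * sin (2 * c * x) := by
    rw [deriv_deriv_sin_potential hc, deriv_sin_potential hc]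
    funext x
    beta_reduce
    rw [mul_assoc 2 c x, sin_two_mul]
    ring
  rw [h, deriv_const_mul_sin_mul]
  funext x
  ring

theorem deriv_deriv_mul_deriv_cos_potential :
    deriv (fun z => deriv (deriv fun x => -(cos (c * x) / c)) z *
        deriv (fun x => -(cos (c * x) / c)) z) = fun x => c ^ 2 * cos (2 * c * x) := by
  have h : (fun z => deriv (deriv fun x => -(cos (c * x) / c)) z *
      deriv (fun x => -(cos (c * x) / c)) z) = fun x => c / 2 * sin (2 * c * x) := by
    rw [deriv_deriv_cos_potential hc, deriv_cos_potential hc]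
    funext x
    beta_reduce
    rw [mul_assoc 2 c x, sin_two_mul]
    ring
  rw [h, deriv_const_mul_sin_mul]
  funext x
  ring

end NonzeroFrequency

theorem trig_potential_deriv_bounds {c : ℝ} (hc : 0 < c) {φ : ℝ → ℝ}
    (hφ : φ = (fun x => sin (c * x) / c) ∨ φ = fun x => -(cos (c * x) / c)) :
    Continuous (deriv (deriv φ)) ∧ (∀ x, |deriv (deriv φ) x| ≤ c) ∧
      Continuous (deriv fun z => deriv (deriv φ) z * deriv φ z) ∧
      ∀ x, |deriv (fun z => deriv (deriv φ) z * deriv φ z) x| ≤ c ^ 2 := by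
  have hc2 : |c ^ 2| = c ^ 2 := abs_of_nonneg (sq_nonneg c)
  rcases hφ with rfl | rfl
  · rw [deriv_deriv_mul_deriv_sin_potential hc.ne', deriv_deriv_sin_potential hc.ne']
    refine ⟨by fun_prop, fun x => ?_, by fun_prop, fun x => ?_⟩
    · simpa only [abs_neg, abs_of_pos hc] using abs_mul_sin_le c (c * x)
    · exact (abs_neg _).trans_le ((abs_mul_cos_le _ _).trans_eq hc2)
  · rw [deriv_deriv_mul_deriv_cos_potential hc.ne', deriv_deriv_cos_potential hc.ne']
    refine ⟨by fun_prop, fun x => ?_, by fun_prop, fun x => ?_⟩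
    · simpa only [abs_of_pos hc] using abs_mul_cos_le c (c * x)
    · exact (abs_mul_cos_le _ _).trans_eq hc2

end TrigonometricPotentials

theorem Lam_Theta_L2_bounds_trigonometric_general
    (k : ℕ) (hk : 1 ≤ k)
    -- T : a Borel bijection of the torus
    (T : ℝ → ℝ) (hTm : Measurable T)
    -- ρ : strictly positive continuous probability density with T_#(ρ dx) = ρ_T dx
    (ρ : ℝ → ℝ) (hρc : Continuous ρ)
    (hρpos : ∀ x, 0 < ρ x)
    (ρT : ℝ → ℝ) (hρTc : Continuous ρT)
    (hρTpos : ∀ x, 0 < ρT x)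
    (hpush : Measure.map T
        ((volume.restrict (Set.Ioc (0:ℝ) 1)).withDensity fun x => ENNReal.ofReal (ρ x))
      = (volume.restrict (Set.Ioc (0:ℝ) 1)).withDensity fun x => ENNReal.ofReal (ρT x)) :
    -- for each of the two potentials φ_j, j ∈ {2k-1, 2k}
    ∀ φj : ℝ → ℝ,
      (φj = fun x => Real.sin (k * x) / k) ∨ (φj = fun x => -(Real.cos (k * x) / k)) →
      ∀ f : ℝ → ℝ, Measurable f →
        IntegrableOn (fun x => (f x) ^ 2 * ρ x) (Set.Ioc (0:ℝ) 1) →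
        -- ‖Λ_j(f)‖_{L²(ρ dx)} ≤ k ⬝ ‖f‖_{L²(ρ dx)}
        (Real.sqrt (∫ x in Set.Ioc (0:ℝ) 1,
            (-(∫ y in Set.Ioc (0:ℝ) 1,
                  f y * (deriv (deriv φj) (T y) / ρT (T y)) * ρ y)
              * torusHat ρT (T x)) ^ 2 * ρ x)
          ≤ (k : ℝ) * Real.sqrt (∫ x in Set.Ioc (0:ℝ) 1, (f x) ^ 2 * ρ x)) ∧
        -- ‖Θ_j(f)‖_{L²(ρ dx)} ≤ 3k² ⬝ ‖f‖_{L²(ρ dx)}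
        (Real.sqrt (∫ x in Set.Ioc (0:ℝ) 1,
            (-(1/2) * (∫ y in Set.Ioc (0:ℝ) 1,
                  f y * (deriv (deriv φj) (T y) / ρT (T y)) * ρ y)
                * (torusHat ρT (T x) * deriv (deriv φj) (T x))
              - (1/2) * (∫ y in Set.Ioc (0:ℝ) 1,
                  f y * (deriv (fun z => deriv (deriv φj) z * deriv φj z) (T y) / ρT (T y)) * ρ y)
                * torusHat ρT (T x)
              + (3/2) * (∫ y in Set.Ioc (0:ℝ) 1,
                  f y * (deriv (deriv φj) (T y) / ρT (T y)) * ρ y)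
                * (∫ y in Set.Ioc (0:ℝ) 1, deriv (deriv φj) y * torusHat ρT y)
                * torusHat ρT (T x)) ^ 2 * ρ x)
          ≤ 3 * (k : ℝ) ^ 2 * Real.sqrt (∫ x in Set.Ioc (0:ℝ) 1, (f x) ^ 2 * ρ x)) := by
  intro φj hφj f hf hf2
  obtain ⟨hg, hgK, hh, hhK⟩ := trig_potential_deriv_bounds (Nat.cast_pos.2 hk) hφj
  exact ⟨sqrt_integral_sq_Lambda_le hTm hρc hρpos hρTc hρTpos hpush hf hf2 hg hgK,
    sqrt_integral_sq_Theta_le hTm hρc hρpos hρTc hρTpos hpush hf hf2 hg hgK hh hhK⟩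

/-- For the trigonometric potentials `φ_{2k-1}(x) = sin(kx)/k` and
`φ_{2k}(x) = -cos(kx)/k`, the associated operators satisfy the `L²(ρ dx)` bounds
`‖Λ_j(f)‖ ≤ k ‖f‖` and `‖Θ_j(f)‖ ≤ 3k² ‖f‖`. -/
theorem Lam_Theta_L2_bounds_trigonometric
    (k : ℕ) (hk : 1 ≤ k)
    -- T : a Borel bijection of the torus
    (T Tinv : ℝ → ℝ) (hTm : Measurable T) (hTinvm : Measurable Tinv)
    (hTmaps : MapsTo T (Set.Ioc (0:ℝ) 1) (Set.Ioc (0:ℝ) 1))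
    (hTinvmaps : MapsTo Tinv (Set.Ioc (0:ℝ) 1) (Set.Ioc (0:ℝ) 1))
    (hTinv : ∀ x ∈ Set.Ioc (0:ℝ) 1, Tinv (T x) = x)
    (hTinv' : ∀ x ∈ Set.Ioc (0:ℝ) 1, T (Tinv x) = x)
    -- ρ : strictly positive continuous probability density with T_#(ρ dx) = ρ_T dx
    (ρ : ℝ → ℝ) (hρc : Continuous ρ) (hρper : Function.Periodic ρ 1)
    (hρpos : ∀ x, 0 < ρ x) (hρone : ∫ x in Set.Ioc (0:ℝ) 1, ρ x = 1)
    (ρT : ℝ → ℝ) (hρTc : Continuous ρT) (hρTper : Function.Periodic ρT 1)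
    (hρTpos : ∀ x, 0 < ρT x)
    (hpush : Measure.map T
        ((volume.restrict (Set.Ioc (0:ℝ) 1)).withDensity fun x => ENNReal.ofReal (ρ x))
      = (volume.restrict (Set.Ioc (0:ℝ) 1)).withDensity fun x => ENNReal.ofReal (ρT x)) :
    -- for each of the two potentials φ_j, j ∈ {2k-1, 2k}
    ∀ φj : ℝ → ℝ,
      (φj = fun x => Real.sin (k * x) / k) ∨ (φj = fun x => -(Real.cos (k * x) / k)) →
      ∀ f : ℝ → ℝ, Measurable f →
        IntegrableOn (fun x => (f x) ^ 2 * ρ x) (Set.Ioc (0:ℝ) 1) →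
        -- ‖Λ_j(f)‖_{L²(ρ dx)} ≤ k ⬝ ‖f‖_{L²(ρ dx)}
        (Real.sqrt (∫ x in Set.Ioc (0:ℝ) 1,
            (-(∫ y in Set.Ioc (0:ℝ) 1,
                  f y * (deriv (deriv φj) (T y) / ρT (T y)) * ρ y)
              * torusHat ρT (T x)) ^ 2 * ρ x)
          ≤ (k : ℝ) * Real.sqrt (∫ x in Set.Ioc (0:ℝ) 1, (f x) ^ 2 * ρ x)) ∧
        -- ‖Θ_j(f)‖_{L²(ρ dx)} ≤ 3k² ⬝ ‖f‖_{L²(ρ dx)}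
        (Real.sqrt (∫ x in Set.Ioc (0:ℝ) 1,
            (-(1/2) * (∫ y in Set.Ioc (0:ℝ) 1,
                  f y * (deriv (deriv φj) (T y) / ρT (T y)) * ρ y)
                * (torusHat ρT (T x) * deriv (deriv φj) (T x))
              - (1/2) * (∫ y in Set.Ioc (0:ℝ) 1,
                  f y * (deriv (fun z => deriv (deriv φj) z * deriv φj z) (T y) / ρT (T y)) * ρ y)
                * torusHat ρT (T x)
              + (3/2) * (∫ y in Set.Ioc (0:ℝ) 1,
                  f y * (deriv (deriv φj) (T y) / ρT (T y)) * ρ y)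
                * (∫ y in Set.Ioc (0:ℝ) 1, deriv (deriv φj) y * torusHat ρT y)
                * torusHat ρT (T x)) ^ 2 * ρ x)
          ≤ 3 * (k : ℝ) ^ 2 * Real.sqrt (∫ x in Set.Ioc (0:ℝ) 1, (f x) ^ 2 * ρ x)) :=
  Lam_Theta_L2_bounds_trigonometric_general k hk T hTm ρ hρc hρpos ρT hρTc hρTpos hpush
end
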